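/- For any density matrix ρ on ℂ^d and α ∈ [0,2], α ≠ 1, the Rényi relative entropy of coherence is bounded by the Rényi entropy of the diagonal: (1/(α−1))·ln ‖(ρ^α)^{diag}‖_{1/α} ≤ S_{1/α}(ρ^{diag}), where S_β(τ) := (1/(1−β))·ln tr(τ^β); equality holds whenever ρ is a pure state. -/

import Mathlib

open Matrix Finset ComplexOrder

/-- Real power of a Hermitian matrix taken on its support, via spectral decomposition. -/
noncomputable def mrpow {n : Type*} [Fintype n] [DecidableEq n]
    (ρ : Matrix n n ℂ) (hρ : ρ.IsHermitian) (α : ℝ) : Matrix n n ℂ :=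
  (hρ.eigenvectorUnitary : Matrix n n ℂ) *
    Matrix.diagonal (fun i => ((hρ.eigenvalues i ^ α : ℝ) : ℂ)) *
    star (hρ.eigenvectorUnitary : Matrix n n ℂ)

/-! With `ρ ^ α = cfc (· ^ α) ρ`: the spectrum of a density matrix lies in `[0, 1]`, where
`x ^ α` decreases in `α`, so `ρ ^ α ≥ ρ` in the Loewner order for `α ≤ 1` and `ρ ^ α ≤ ρ` for
`α ≥ 1`. Diagonal entries inherit the comparison, hence so does `∑ⱼ (·)ⱼⱼ ^ (1/α)`, and the
sign of `(α - 1)⁻¹` turns either case into the inequality. A pure state is a projection, with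
spectrum in `{0, 1}`, so `ρ ^ α = ρ` and the two sides coincide. -/

open scoped MatrixOrder

lemma Finset.sum_rpow_pos_of_sum_pos {ι : Type*} [Fintype ι] {f : ι → ℝ}
    (hf : ∀ i, 0 ≤ f i) (h : 0 < ∑ i, f i) (s : ℝ) : 0 < ∑ i, f i ^ s := by
  obtain ⟨i, -, hi⟩ := Finset.exists_lt_of_sum_lt (s := univ) (f := 0) (g := f)
    (by simpa using h)
  exact (Real.rpow_pos_of_pos hi s).trans_le
    (Finset.single_le_sum (fun j _ => Real.rpow_nonneg (hf j) s) (mem_univ i))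

namespace Matrix

variable {n : Type*} {ρ : Matrix n n ℂ}

lemma PosSemidef.re_apply_self_nonneg (hρ : ρ.PosSemidef) (i : n) : 0 ≤ (ρ i i).re :=
  (Complex.nonneg_iff.mp hρ.diag_nonneg).1

lemma re_apply_self_le_of_le {A B : Matrix n n ℂ} (h : A ≤ B) (i : n) :
    (A i i).re ≤ (B i i).re := by
  simpa using (le_iff.mp h).re_apply_self_nonneg i

variable [Fintype n]

lemma isIdempotentElem_vecMulVec_star {v : n → ℂ} (h : (vecMulVec v (star v)).trace = 1) :
    IsIdempotentElem (vecMulVec v (star v)) := by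
  rw [trace_vecMulVec, dotProduct_comm] at h
  rw [IsIdempotentElem, vecMulVec_mul_vecMulVec, h, one_smul]

variable [DecidableEq n]

lemma mrpow_eq_cfc (hρ : ρ.IsHermitian) (α : ℝ) :
    mrpow ρ hρ α = cfc (· ^ α : ℝ → ℝ) ρ := by
  rw [hρ.cfc_eq, IsHermitian.cfc, Unitary.conjStarAlgAut_apply]
  rfl

lemma mrpow_one (hρ : ρ.IsHermitian) : mrpow ρ hρ 1 = ρ := by
  simpa [mrpow_eq_cfc] using cfc_id' ℝ ρ hρ.isSelfAdjoint

lemma trace_mrpow (hρ : ρ.IsHermitian) (α : ℝ) :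
    (mrpow ρ hρ α).trace = ∑ i, ((hρ.eigenvalues i ^ α : ℝ) : ℂ) := by
  rw [mrpow, trace_mul_cycle, mem_unitaryGroup_iff'.mp hρ.eigenvectorUnitary.2, one_mul,
    trace_diagonal]

lemma PosSemidef.mrpow (hρ : ρ.PosSemidef) (α : ℝ) : (mrpow ρ hρ.1 α).PosSemidef := by
  rw [mrpow_eq_cfc, ← nonneg_iff_posSemidef]
  exact cfc_nonneg fun x hx => Real.rpow_nonneg (spectrum_nonneg_of_nonneg hρ.nonneg hx) α

lemma mrpow_le_mrpow_of_exponent_ge (hρ : ρ.PosSemidef) (hle : ∀ i, hρ.1.eigenvalues i ≤ 1)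
    {α β : ℝ} (hα : 0 ≤ α) (hαβ : α ≤ β) : mrpow ρ hρ.1 β ≤ mrpow ρ hρ.1 α := by
  simp only [mrpow_eq_cfc]
  refine cfc_mono (fun x hx => ?_) (ρ.finite_real_spectrum.continuousOn _)
    (ρ.finite_real_spectrum.continuousOn _)
  obtain ⟨i, rfl⟩ := hρ.1.spectrum_real_eq_range_eigenvalues ▸ hx
  exact Real.rpow_le_rpow_of_exponent_ge' (hρ.eigenvalues_nonneg i) (hle i) hα hαβ

lemma mrpow_eq_self_of_isIdempotentElem (hρ : ρ.IsHermitian) (hid : IsIdempotentElem ρ)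
    {α : ℝ} (hα : α ≠ 0) : mrpow ρ hρ α = ρ := by
  have hspec := (isIdempotentElem_iff_spectrum_subset ℝ ρ hρ.isSelfAdjoint).mp hid
  rw [mrpow_eq_cfc]
  conv_rhs => rw [← cfc_id' ℝ ρ hρ.isSelfAdjoint]
  refine cfc_congr fun x hx => ?_
  rcases hspec hx with rfl | rfl
  · exact Real.zero_rpow hα
  · exact Real.one_rpow α

section DensityMatrix

variable (hρ : ρ.PosSemidef) (htr : ρ.trace = 1)
include hρ htr

lemma PosSemidef.sum_eigenvalues_eq_one : ∑ i, hρ.1.eigenvalues i = 1 := by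
  simpa [Complex.re_sum] using congrArg Complex.re (hρ.1.trace_eq_sum_eigenvalues.symm.trans htr)

lemma PosSemidef.eigenvalues_le_one (i : n) : hρ.1.eigenvalues i ≤ 1 :=
  hρ.sum_eigenvalues_eq_one htr ▸
    Finset.single_le_sum (fun j _ => hρ.eigenvalues_nonneg j) (mem_univ i)

lemma sum_re_mrpow_apply_self_rpow_pos (α s : ℝ) :
    0 < ∑ j, (mrpow ρ hρ.1 α j j).re ^ s := by
  refine sum_rpow_pos_of_sum_pos (hρ.mrpow α).re_apply_self_nonneg ?_ s
  have hsum : ∑ j, (mrpow ρ hρ.1 α j j).re = ∑ i, hρ.1.eigenvalues i ^ α := by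
    simpa [trace, Complex.re_sum] using congrArg Complex.re (trace_mrpow hρ.1 α)
  exact hsum ▸ sum_rpow_pos_of_sum_pos hρ.eigenvalues_nonneg
    (by rw [hρ.sum_eigenvalues_eq_one htr]; exact one_pos) α

lemma sum_re_mrpow_apply_self_rpow_le {α β s : ℝ} (hα : 0 ≤ α) (hαβ : α ≤ β) (hs : 0 ≤ s) :
    ∑ j, (mrpow ρ hρ.1 β j j).re ^ s ≤ ∑ j, (mrpow ρ hρ.1 α j j).re ^ s :=
  sum_le_sum fun j _ => Real.rpow_le_rpow ((hρ.mrpow β).re_apply_self_nonneg j)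
    (re_apply_self_le_of_le
      (mrpow_le_mrpow_of_exponent_ge hρ (hρ.eigenvalues_le_one htr) hα hαβ) j) hs

end DensityMatrix

end Matrix

theorem renyiCoherence_le_renyiEntropy_diag_general {d : ℕ}
    (ρ : Matrix (Fin d) (Fin d) ℂ) (hρ : ρ.PosSemidef) (htr : ρ.trace = 1)
    (α : ℝ) (hα0 : 0 < α) :
    (α - 1)⁻¹ * Real.log ((∑ j, ((mrpow ρ hρ.1 α) j j).re ^ α⁻¹) ^ α)
      ≤ (1 - α⁻¹)⁻¹ * Real.log (∑ j, (ρ j j).re ^ α⁻¹) ∧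
    (∀ v : Fin d → ℂ, ρ = Matrix.vecMulVec v (star v) →
      (α - 1)⁻¹ * Real.log ((∑ j, ((mrpow ρ hρ.1 α) j j).re ^ α⁻¹) ^ α)
        = (1 - α⁻¹)⁻¹ * Real.log (∑ j, (ρ j j).re ^ α⁻¹)) := by
  have hcoef : (1 - α⁻¹)⁻¹ = (α - 1)⁻¹ * α := by
    rw [show 1 - α⁻¹ = (α - 1) * α⁻¹ by field_simp, mul_inv, inv_inv]
  have hdiag : ∑ j, (ρ j j).re ^ α⁻¹ = ∑ j, (mrpow ρ hρ.1 1 j j).re ^ α⁻¹ := by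
    rw [mrpow_one]
  have hQ := sum_re_mrpow_apply_self_rpow_pos hρ htr α α⁻¹
  have hP := hdiag ▸ sum_re_mrpow_apply_self_rpow_pos hρ htr 1 α⁻¹
  have hs : 0 ≤ α⁻¹ := inv_nonneg.mpr hα0.le
  refine ⟨?_, fun v hv => ?_⟩
  · rw [Real.log_rpow hQ, hcoef, mul_assoc]
    rcases le_total α 1 with hα1 | hα1
    · have hPQ := hdiag ▸ sum_re_mrpow_apply_self_rpow_le hρ htr hα0.le hα1 hs
      exact mul_le_mul_of_nonpos_left (by gcongr) (inv_nonpos.mpr (sub_nonpos.mpr hα1))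
    · have hQP := hdiag ▸ sum_re_mrpow_apply_self_rpow_le hρ htr zero_le_one hα1 hs
      exact mul_le_mul_of_nonneg_left (by gcongr) (inv_nonneg.mpr (sub_nonneg.mpr hα1))
  · have hid : IsIdempotentElem ρ := hv ▸ isIdempotentElem_vecMulVec_star (hv ▸ htr)
    rw [mrpow_eq_self_of_isIdempotentElem hρ.1 hid hα0.ne', Real.log_rpow hP, hcoef, mul_assoc]

/-- For a density matrix `ρ` and `α ∈ (0,2]`, `α ≠ 1`, the Rényi relative entropy of
coherence `C_{r,α}(ρ) = (α−1)⁻¹ ln ‖(ρ^α)^diag‖_{1/α}` is bounded above by the Rényi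
entropy `S_{1/α}(ρ^diag) = (1−1/α)⁻¹ ln ∑ⱼ ρⱼⱼ^{1/α}` of the diagonal part; equality
holds whenever `ρ` is a pure state. -/
theorem renyiCoherence_le_renyiEntropy_diag {d : ℕ}
    (ρ : Matrix (Fin d) (Fin d) ℂ) (hρ : ρ.PosSemidef) (htr : ρ.trace = 1)
    (α : ℝ) (hα0 : 0 < α) (hα2 : α ≤ 2) (hα1 : α ≠ 1) :
    (α - 1)⁻¹ * Real.log ((∑ j, ((mrpow ρ hρ.1 α) j j).re ^ α⁻¹) ^ α)
      ≤ (1 - α⁻¹)⁻¹ * Real.log (∑ j, (ρ j j).re ^ α⁻¹) ∧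
    (∀ v : Fin d → ℂ, ρ = Matrix.vecMulVec v (star v) →
      (α - 1)⁻¹ * Real.log ((∑ j, ((mrpow ρ hρ.1 α) j j).re ^ α⁻¹) ^ α)
        = (1 - α⁻¹)⁻¹ * Real.log (∑ j, (ρ j j).re ^ α⁻¹)) :=
  renyiCoherence_le_renyiEntropy_diag_general ρ hρ htr α hα0
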